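/- arXiv:1908.04712 — 2 statements merged into one kernel-verified Lean document; each statement's English description precedes it below -/
import Mathlib

section
/- Let A be an n×n real matrix and let n⃗ ∈ ℝⁿ be a unit vector. The function t ↦ M(t) n⃗ / ‖M(t) n⃗‖, where M(t) := ((1 + t·A)⁻¹)ᵀ, defined for |t| small enough that 1 + t·A is invertible, is differentiable at t = 0 with derivative equal to −Aᵀ n⃗ + ⟨n⃗, A n⃗⟩ n⃗, which equals −(D_Γ)ᵀ n⃗ for the tangential matrix D_Γ := A − A n⃗ n⃗ᵀ. -/
/-!
Since `(1 + tA)⁻¹ = 1 - tA + O(t²)`, the unnormalized vector `M(t)n⃗` has derivative `-Aᵀn⃗`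
at `t = 0`. Differentiating `x ↦ x / ‖x‖` at a unit vector `x` gives the orthogonal projection
onto `x^⊥`, so the transported normal has derivative `-Aᵀn⃗ + ⟨n⃗, Aᵀn⃗⟩n⃗`, and
`⟨n⃗, Aᵀn⃗⟩ = ⟨n⃗, An⃗⟩`. Finally `(A n⃗ n⃗ᵀ)ᵀ n⃗ = ⟨n⃗, An⃗⟩ n⃗`.
-/

open Matrix

/-- Multiplication of a matrix with a vector of `EuclideanSpace ℝ (Fin n)`. -/
noncomputable def mulVecE {n : ℕ} (A : Matrix (Fin n) (Fin n) ℝ)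
    (v : EuclideanSpace ℝ (Fin n)) : EuclideanSpace ℝ (Fin n) :=
  WithLp.toLp 2 (A.mulVec v)

section Normalization

open scoped RealInnerProductSpace

variable {F : Type*} [NormedAddCommGroup F] [InnerProductSpace ℝ F] {f : ℝ → F} {f' : F} {t : ℝ}

theorem HasDerivAt.norm (hf : HasDerivAt f f' t) (h0 : f t ≠ 0) :
    HasDerivAt (fun s => ‖f s‖) (⟪f t, f'⟫ / ‖f t‖) t := by
  have hpos : 0 < ‖f t‖ := norm_pos_iff.mpr h0
  have hsqrt := hf.norm_sq.sqrt (by positivity)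
  simp only [Real.sqrt_sq (norm_nonneg _)] at hsqrt
  convert hsqrt using 1
  field_simp

theorem HasDerivAt.inv_norm_smul (hf : HasDerivAt f f' t) (h0 : f t ≠ 0) :
    HasDerivAt (fun s => ‖f s‖⁻¹ • f s)
      (‖f t‖⁻¹ • f' - (⟪f t, f'⟫ / ‖f t‖ ^ 3) • f t) t := by
  have hinv := (hf.norm h0).inv (norm_ne_zero_iff.mpr h0)
  refine (hinv.smul hf).congr_deriv ?_
  rw [sub_eq_add_neg, ← neg_smul]
  congr 2
  field_simp

end Normalization

theorem hasDerivAt_ringInverse_one_add_smul {𝕜 R : Type*} [NontriviallyNormedField 𝕜]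
    [NormedRing R] [HasSummableGeomSeries R] [NormedAlgebra 𝕜 R] (a : R) :
    HasDerivAt (fun t : 𝕜 => Ring.inverse (1 + t • a)) (-a) 0 := by
  have hline : HasDerivAt (fun t : 𝕜 => 1 + t • a) a 0 := by
    simpa using ((hasDerivAt_id (0 : 𝕜)).smul_const a).const_add (1 : R)
  have := (hasFDerivAt_ringInverse (𝕜 := 𝕜) (1 : Rˣ)).comp_hasDerivAt_of_eq 0 hline (by simp)
  simp only [Units.val_one, inv_one, _root_.neg_apply,
    ContinuousLinearMap.mulLeftRight_apply, one_mul, mul_one] at this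
  exact this

theorem Matrix.hasDerivAt_vecMul_inv_one_add_smul {𝕜 m : Type*} [NontriviallyNormedField 𝕜]
    [CompleteSpace 𝕜] [Fintype m] [DecidableEq m] (A : Matrix m m 𝕜) (v : m → 𝕜) :
    HasDerivAt (fun t : 𝕜 => v ᵥ* (1 + t • A)⁻¹) (-(v ᵥ* A)) 0 := by
  let _ : NormedRing (Matrix m m 𝕜) := Matrix.linftyOpNormedRing
  let _ : NormedAlgebra 𝕜 (Matrix m m 𝕜) := Matrix.linftyOpNormedAlgebra
  -- Instance search cannot match the product-uniformity `CompleteSpace` instance against this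
  -- norm's uniformity, so completeness is supplied via finite-dimensionality.
  have _ : HasSummableGeomSeries (Matrix m m 𝕜) :=
    @instHasSummableGeomSeriesOfCompleteSpace _ _ (FiniteDimensional.complete 𝕜 _)
  let vecMulLeft : Matrix m m 𝕜 →ₗ[𝕜] m → 𝕜 :=
    { toFun := fun M => v ᵥ* M
      map_add' := fun M N => vecMul_add M N v
      map_smul' := fun c M => vecMul_smul v c M }
  have hinv : HasDerivAt (fun t : 𝕜 => (1 + t • A)⁻¹) (-A) 0 := by
    simp only [Matrix.nonsing_inv_eq_ringInverse]
    exact hasDerivAt_ringInverse_one_add_smul A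
  exact ((LinearMap.toContinuousLinearMap vecMulLeft).hasFDerivAt.comp_hasDerivAt 0
    hinv).congr_deriv (vecMul_neg v A)

theorem inner_mulVecE_transpose {n : ℕ} (A : Matrix (Fin n) (Fin n) ℝ)
    (v w : EuclideanSpace ℝ (Fin n)) :
    inner ℝ v (mulVecE Aᵀ w) = inner ℝ (mulVecE A v) w := by
  simp only [mulVecE, EuclideanSpace.inner_eq_star_dotProduct, star_trivial, mulVec_transpose]
  rw [dotProduct_comm, dotProduct_mulVec, dotProduct_comm]

theorem mulVecE_transpose_sub_mul_vecMulVec {n : ℕ} (A : Matrix (Fin n) (Fin n) ℝ)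
    (v : EuclideanSpace ℝ (Fin n)) :
    mulVecE (A - A * vecMulVec v v)ᵀ v = mulVecE Aᵀ v - inner ℝ v (mulVecE A v) • v := by
  have hinner : inner ℝ v (mulVecE A v) = v ⬝ᵥ Aᵀ *ᵥ v := by
    rw [← real_inner_comm, ← inner_mulVecE_transpose, EuclideanSpace.inner_eq_star_dotProduct,
      star_trivial, dotProduct_comm]
    rfl
  rw [hinner]
  ext i
  simp [mulVecE, transpose_sub, transpose_mul, sub_mulVec, ← mulVec_mulVec, vecMulVec_mulVec]

theorem hasDerivAt_mulVecE_transpose_inv_one_add_smul {n : ℕ} (A : Matrix (Fin n) (Fin n) ℝ)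
    (v : EuclideanSpace ℝ (Fin n)) :
    HasDerivAt (fun t : ℝ => mulVecE ((1 + t • A)⁻¹)ᵀ v) (-mulVecE Aᵀ v) 0 := by
  simp only [mulVecE, mulVec_transpose]
  exact (EuclideanSpace.equiv (Fin n) ℝ).symm.hasFDerivAt.comp_hasDerivAt 0
    (hasDerivAt_vecMul_inv_one_add_smul A v)

/-- For a unit vector `n⃗`, the transported unit normal `t ↦ M(t)n⃗/‖M(t)n⃗‖` with
`M(t) = ((1 + t•A)⁻¹)ᵀ` is differentiable at `t = 0` with derivative
`-Aᵀn⃗ + ⟪n⃗, An⃗⟫ n⃗`, which equals `-(D_Γ)ᵀ n⃗` for the tangential matrix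
`D_Γ = A - A n⃗ n⃗ᵀ`. -/
theorem transported_normal_hasDerivAt (n : ℕ) (A : Matrix (Fin n) (Fin n) ℝ)
    (v : EuclideanSpace ℝ (Fin n)) (hv : ‖v‖ = 1) :
    HasDerivAt
      (fun t : ℝ =>
        ‖mulVecE ((1 + t • A)⁻¹)ᵀ v‖⁻¹ • mulVecE ((1 + t • A)⁻¹)ᵀ v)
      (-(mulVecE Aᵀ v) + (inner ℝ v (mulVecE A v) : ℝ) • v) 0 ∧
    -(mulVecE Aᵀ v) + (inner ℝ v (mulVecE A v) : ℝ) • v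
      = -(mulVecE (A - A * Matrix.vecMulVec v v)ᵀ v) := by
  have hv0 : mulVecE ((1 + (0 : ℝ) • A)⁻¹)ᵀ v = v := by simp [mulVecE]
  have hderiv := (hasDerivAt_mulVecE_transpose_inv_one_add_smul A v).inv_norm_smul
    (by rw [hv0, ← norm_ne_zero_iff, hv]; exact one_ne_zero)
  rw [hv0, hv, inner_neg_right, inner_mulVecE_transpose, real_inner_comm] at hderiv
  refine ⟨hderiv.congr_deriv (by simp [sub_eq_add_neg]), ?_⟩
  rw [mulVecE_transpose_sub_mul_vecMulVec, neg_sub, neg_add_eq_sub]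
end

section
/- Let Ω ⊆ ℝⁿ be a measurable set, f ∈ L¹(Ω), and let V : ℝⁿ → ℝⁿ be continuously differentiable with bounded derivative, i.e. sup_x ‖DV(x)‖ < ∞. Then the function t ↦ ∫_Ω f(x) · det(I + t·DV(x)) dx is differentiable at t = 0 with derivative ∫_Ω f(x) · div V(x) dx. -/
open Matrix MeasureTheory

/-- The Jacobian matrix `DV(x)` of a vector field `V : ℝⁿ → ℝⁿ` at `x`. -/
noncomputable def jacM {n : ℕ} (V : (Fin n → ℝ) → (Fin n → ℝ)) (x : Fin n → ℝ) :
    Matrix (Fin n) (Fin n) ℝ :=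
  LinearMap.toMatrix' (fderiv ℝ V x : (Fin n → ℝ) →ₗ[ℝ] (Fin n → ℝ))

/-!
Multilinearity of the determinant in the rows gives the principal-minor expansion
`det (1 + t • M) = ∑ₛ t ^ |s| • det M[s, s]`. Hence the integrand is a polynomial in `t` whose
coefficients `f · det (DV)[s, s]` are integrable, because the minors of the bounded matrix field
`DV` are bounded. The integral is then a polynomial in `t` too, and its derivative at `0` is
`∫ f · tr DV`, as `d/dt det (1 + t • M) = tr M` at `t = 0`.
-/

theorem Matrix.det_one_add_smul_eq_sum_minors {n R : Type*} [Fintype n] [DecidableEq n]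
    [CommRing R] (t : R) (M : Matrix n n R) :
    det (1 + t • M) = ∑ s : Finset n, t ^ s.card * (M.submatrix ((↑) : s → n) (↑)).det := by
  rw [add_comm]
  change detRowAlternating ((t • M).row + (1 : Matrix n n R).row) = _
  rw [detRowAlternating.map_add_univ]
  refine Finset.sum_congr rfl fun s _ => ?_
  have h : s.piecewise (t • M).row (1 : Matrix n n R).row =
      s.piecewise (fun i => (fun _ => t) i • s.piecewise M.row (1 : Matrix n n R).row i)
        (s.piecewise M.row (1 : Matrix n n R).row) := by
    ext i : 1
    by_cases hi : i ∈ s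
    · simp only [Finset.piecewise_eq_of_mem _ _ _ hi]; rfl
    · simp only [Finset.piecewise_eq_of_notMem _ _ _ hi]
  rw [h, ← detRowAlternating.coe_multilinearMap, MultilinearMap.map_piecewise_smul,
    Finset.prod_const, smul_eq_mul, ← det_piecewise_one_eq_submatrix_det]
  rfl

theorem Matrix.continuous_det_submatrix {n m R : Type*} [Fintype m] [DecidableEq m] [CommRing R]
    [TopologicalSpace R] [IsTopologicalRing R] (e : m → n) :
    Continuous fun M : Matrix n n R => (M.submatrix e e).det := by
  fun_prop

theorem Matrix.hasDerivAt_det_one_add_smul {n 𝕜 : Type*} [Fintype n] [DecidableEq n]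
    [NontriviallyNormedField 𝕜] (M : Matrix n n 𝕜) :
    HasDerivAt (fun t : 𝕜 => det (1 + t • M)) M.trace 0 := by
  rw [funext fun t : 𝕜 => det_one_add_smul t M]
  simpa using (((hasDerivAt_id (0 : 𝕜)).const_mul M.trace).const_add 1).fun_add
    ((Polynomial.hasDerivAt _ 0).fun_mul (hasDerivAt_pow 2 (0 : 𝕜)))

theorem hasDerivAt_integral_of_eq_sum_smul {α ι E : Type*} [MeasurableSpace α] {μ : Measure α}
    [Fintype ι] [NormedAddCommGroup E] [NormedSpace ℝ E] {F : ℝ → α → E} {F' : α → E} {t₀ : ℝ}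
    (c : ι → ℝ → ℝ) (c' : ι → ℝ) (g : ι → α → E) (hc : ∀ i, HasDerivAt (c i) (c' i) t₀)
    (hg : ∀ i, Integrable (g i) μ) (hF : ∀ t x, F t x = ∑ i, c i t • g i x)
    (hF' : ∀ x, HasDerivAt (F · x) (F' x) t₀) :
    HasDerivAt (fun t => ∫ x, F t x ∂μ) (∫ x, F' x ∂μ) t₀ := by
  have hF'_eq : ∀ x, F' x = ∑ i, c' i • g i x := fun x =>
    (hF' x).unique <| by
      simp_rw [hF]
      exact HasDerivAt.fun_sum fun i _ => (hc i).smul_const (g i x)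
  have integral_sum : ∀ a : ι → ℝ, ∫ x, ∑ i, a i • g i x ∂μ = ∑ i, a i • ∫ x, g i x ∂μ := by
    intro a
    rw [integral_finsetSum (f := fun i x => a i • g i x) _ fun i _ => (hg i).smul (a i)]
    simp_rw [integral_smul]
  simp_rw [hF, integral_sum, hF'_eq, integral_sum]
  exact HasDerivAt.fun_sum fun i _ => (hc i).smul_const _

theorem continuous_toMatrix'_coe {m n 𝕜 : Type*} [Fintype n] [DecidableEq n]
    [NontriviallyNormedField 𝕜] :
    Continuous fun L : (n → 𝕜) →L[𝕜] (m → 𝕜) =>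
      LinearMap.toMatrix' (L : (n → 𝕜) →ₗ[𝕜] (m → 𝕜)) :=
  continuous_pi fun i => continuous_pi fun j => by
    simp only [LinearMap.toMatrix'_apply, ContinuousLinearMap.coe_coe]
    fun_prop

theorem Integrable.mul_comp_of_mem_isCompact {α E : Type*} [MeasurableSpace α] {μ : Measure α}
    [TopologicalSpace E] {f : α → ℝ} {φ : E → ℝ} {u : α → E} {K : Set E}
    (hf : Integrable f μ) (hφ : Continuous φ) (hu : AEStronglyMeasurable u μ) (hK : IsCompact K)
    (huK : ∀ x, u x ∈ K) : Integrable (fun x => f x * φ (u x)) μ := by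
  obtain ⟨B, hB⟩ := hK.exists_bound_of_continuousOn hφ.continuousOn
  exact hf.mul_bdd (hφ.comp_aestronglyMeasurable hu) (ae_of_all _ fun x => hB _ (huK x))

theorem volume_integral_hasDerivAt_div_general (n : ℕ) (Ω : Set (Fin n → ℝ))
    (f : (Fin n → ℝ) → ℝ) (hf : IntegrableOn f Ω)
    (V : (Fin n → ℝ) → (Fin n → ℝ)) (hV : ContDiff ℝ 1 V)
    (C : ℝ) (hC : ∀ x, ‖fderiv ℝ V x‖ ≤ C) :
    HasDerivAt (fun t : ℝ => ∫ x in Ω, f x * (1 + t • jacM V x).det)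
      (∫ x in Ω, f x * (jacM V x).trace) 0 := by
  have hminor : ∀ s : Finset (Fin n),
      IntegrableOn (fun x => f x * ((jacM V x).submatrix ((↑) : s → Fin n) (↑)).det) Ω :=
    fun s => Integrable.mul_comp_of_mem_isCompact (u := fderiv ℝ V) hf
      ((continuous_det_submatrix ((↑) : s → Fin n)).comp continuous_toMatrix'_coe)
      (hV.continuous_fderiv one_ne_zero).aestronglyMeasurable (isCompact_closedBall 0 C)
      fun x => mem_closedBall_zero_iff.2 (hC x)
  refine hasDerivAt_integral_of_eq_sum_smul (fun s t => t ^ s.card) _ _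
    (fun s => hasDerivAt_pow _ _) hminor (fun t x => ?_)
    fun x => (hasDerivAt_det_one_add_smul _).const_mul (f x)
  rw [det_one_add_smul_eq_sum_minors, Finset.mul_sum]
  exact Finset.sum_congr rfl fun s _ => mul_left_comm _ _ _

/-- For `f ∈ L¹(Ω)` and a C¹ vector field `V` with bounded derivative, the map
`t ↦ ∫_Ω f(x) · det(I + t·DV(x)) dx` is differentiable at `t = 0` with derivative
`∫_Ω f(x) · div V(x) dx`, where `div V = trace(DV)`. -/
theorem volume_integral_hasDerivAt_div (n : ℕ) (Ω : Set (Fin n → ℝ))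
    (hΩ : MeasurableSet Ω) (f : (Fin n → ℝ) → ℝ) (hf : IntegrableOn f Ω)
    (V : (Fin n → ℝ) → (Fin n → ℝ)) (hV : ContDiff ℝ 1 V)
    (C : ℝ) (hC : ∀ x, ‖fderiv ℝ V x‖ ≤ C) :
    HasDerivAt (fun t : ℝ => ∫ x in Ω, f x * (1 + t • jacM V x).det)
      (∫ x in Ω, f x * (jacM V x).trace) 0 :=
  volume_integral_hasDerivAt_div_general n Ω f hf V hV C hC
end
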